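/- Let q : ℝ → ℝ be twice continuously differentiable, satisfy the Painlevé II equation q''(s) = s·q(s) + 2·q(s)³ for all s ∈ ℝ, and satisfy the decay bound: there is a constant C with |q(s)| ≤ C·e^{−s} and |q'(s)| ≤ C·e^{−s} for all s ≥ 0. Define F(s) := exp(−∫_s^∞ (x−s)·q(x)² dx), u₀₀(s) := ∫_s^∞ q(x)² dx, q₁ := q' + u₀₀·q, u₁₀(s) := ∫_s^∞ q₁(x)·q(x) dx, q₂(s) := s·q(s) − u₁₀(s)·q(s) + u₀₀(s)·q₁(s), and u₂₁(s) := ∫_s^∞ q₂(x)·q₁(x) dx. Then for every s ∈ ℝ, F(s)·u₂₁(s) = −(1/4)·F'(s) + (1/8)·F''''(s). -/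

import Mathlib

/-!
Two facts drive the computation: `u₀₀' = -q²`, and `F = exp (-v)` with
`v(s) = ∫_s^∞ x q² - s u₀₀(s)`, so `F' = u₀₀ F`. Differentiating three more times, using
Painlevé II for `q''`, gives `F⁗ = P F` with `P = fourthDerivCoeff q u₀₀` polynomial in
`s, u₀₀, q, q'`. The tail integrals `u₁₀` and `u₂₁` are then identified with
`(u₀₀² - q²)/2` and `-u₀₀/4 + P/8`: both sides have derivative `-q₁ q`, resp. `-q₂ q₁`, and
vanish at `+∞`. The exponential decay of `q` and `q'` makes every integrand integrable.
-/

open MeasureTheory Set Filter Topology Asymptotics Real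

theorem hasDerivAt_integral_Ioi {E : Type*} [NormedAddCommGroup E] [NormedSpace ℝ E]
    [CompleteSpace E] {f : ℝ → E} (hf : Continuous f) (hint : ∀ a, IntegrableOn f (Ioi a))
    (s : ℝ) : HasDerivAt (fun t => ∫ x in Ioi t, f x) (-f s) s := by
  have hsplit : (fun t => ∫ x in Ioi t, f x)
      = fun t => (∫ x in Ioi s, f x) - ∫ x in s..t, f x := by
    ext t
    rw [← intervalIntegral.integral_Ioi_sub_Ioi' (hint s) (hint t), sub_sub_cancel]
  rw [hsplit, ← zero_sub]
  exact (hasDerivAt_const s _).sub (intervalIntegral.integral_hasDerivAt_right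
    (hf.intervalIntegrable _ _) hf.aestronglyMeasurable.stronglyMeasurableAtFilter hf.continuousAt)

theorem integrableOn_Ioi_of_isBigO_exp_neg {f : ℝ → ℝ} (hf : Continuous f)
    (ho : f =O[atTop] fun x => exp (-x)) (a : ℝ) : IntegrableOn f (Ioi a) :=
  integrable_of_isBigO_exp_neg one_pos hf.continuousOn (by simpa using ho)

theorem isBigO_exp_neg_of_abs_le {f : ℝ → ℝ} {C : ℝ}
    (h : ∀ x, 0 ≤ x → |f x| ≤ C * exp (-x)) : f =O[atTop] fun x => exp (-x) :=
  IsBigO.of_bound C <| (eventually_ge_atTop 0).mono fun x hx => by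
    simpa only [norm_eq_abs, abs_exp] using h x hx

theorem Asymptotics.IsBigO.mul_tendsto {α : Type*} {l : Filter α} {f g e : α → ℝ} {c : ℝ}
    (hf : f =O[l] e) (hg : Tendsto g l (𝓝 c)) : (fun x => f x * g x) =O[l] e := by
  simpa using hf.mul (hg.isBigO_one ℝ)

theorem tendsto_id_mul_of_isBigO_exp_neg {f : ℝ → ℝ} (hf : f =O[atTop] fun x => exp (-x)) :
    Tendsto (fun x => x * f x) atTop (𝓝 0) :=
  ((isBigO_refl (fun x : ℝ => x) atTop).mul hf).trans_tendsto (by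
    simpa using tendsto_pow_mul_exp_neg_atTop_nhds_zero 1)

theorem hasDerivAt_deriv_of_painleveII {q : ℝ → ℝ} (hq : ContDiff ℝ 2 q)
    (hP2 : ∀ s : ℝ, iteratedDeriv 2 q s = s * q s + 2 * q s ^ 3) (s : ℝ) :
    HasDerivAt (deriv q) (s * q s + 2 * q s ^ 3) s := by
  rw [← hP2, iteratedDeriv_succ, iteratedDeriv_one]
  exact (hq.differentiable_deriv_two s).hasDerivAt

theorem HasDerivAt.mul_of_deriv_eq_mul {F u p : ℝ → ℝ} {p' s : ℝ}
    (hF : ∀ t, HasDerivAt F (u t * F t) t) (hp : HasDerivAt p p' s) :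
    HasDerivAt (fun t => p t * F t) ((p' + p s * u s) * F s) s :=
  (hp.mul (hF s)).congr_deriv (by ring)

noncomputable def fourthDerivCoeff (q u : ℝ → ℝ) (s : ℝ) : ℝ :=
  u s ^ 4 - 6 * u s ^ 2 * q s ^ 2 - 8 * u s * q s * deriv q s - q s ^ 4
    - 2 * deriv q s ^ 2 - 2 * s * q s ^ 2

theorem iteratedDeriv_four_eq {q u F : ℝ → ℝ} (hq : Differentiable ℝ q)
    (hq'' : ∀ s, HasDerivAt (deriv q) (s * q s + 2 * q s ^ 3) s)
    (hu : ∀ s, HasDerivAt u (-(q s ^ 2)) s) (hF : ∀ s, HasDerivAt F (u s * F s) s) (s : ℝ) :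
    iteratedDeriv 4 F s = fourthDerivCoeff q u s * F s := by
  have hq' : ∀ t, HasDerivAt q (deriv q t) t := fun t => (hq t).hasDerivAt
  have d1 : deriv F = fun t => u t * F t := funext fun t => (hF t).deriv
  have d2 : deriv (fun t => u t * F t) = fun t => (u t ^ 2 - q t ^ 2) * F t :=
    funext fun t => ((hu t).mul_of_deriv_eq_mul hF).deriv.trans (by ring)
  have d3 : deriv (fun t => (u t ^ 2 - q t ^ 2) * F t)
      = fun t => (u t ^ 3 - 3 * (u t * q t ^ 2) - 2 * (q t * deriv q t)) * F t :=
    funext fun t => (((hu t).fun_pow 2).fun_sub ((hq' t).fun_pow 2)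
      |>.mul_of_deriv_eq_mul hF).deriv.trans (by push_cast; ring)
  have d4 : deriv (fun t => (u t ^ 3 - 3 * (u t * q t ^ 2) - 2 * (q t * deriv q t)) * F t)
      = fun t => fourthDerivCoeff q u t * F t :=
    funext fun t => (((hu t).fun_pow 3)
      |>.fun_sub (((hu t).fun_mul ((hq' t).fun_pow 2)).const_mul 3)
      |>.fun_sub (((hq' t).fun_mul (hq'' t)).const_mul 2) |>.mul_of_deriv_eq_mul hF).deriv.trans
      (by unfold fourthDerivCoeff; push_cast; ring)
  rw [iteratedDeriv_eq_iterate]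
  simp only [Function.iterate_succ, Function.iterate_zero, Function.comp_apply, id]
  rw [d1, d2, d3, d4]

theorem integrableOn_Ioi_sq {q : ℝ → ℝ} (hq : Continuous q)
    (hq0 : q =O[atTop] fun x => exp (-x)) (a : ℝ) :
    IntegrableOn (fun x => q x ^ 2) (Ioi a) :=
  integrableOn_Ioi_of_isBigO_exp_neg (f := fun x => q x ^ 2) (hq.pow 2)
    ((hq0.mul_tendsto (hq0.trans_tendsto tendsto_exp_neg_atTop_nhds_zero)).congr_left
      fun x => (sq (q x)).symm) a

theorem hasDerivAt_integral_Ioi_sq {q : ℝ → ℝ} (hq : Continuous q)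
    (hq0 : q =O[atTop] fun x => exp (-x)) (s : ℝ) :
    HasDerivAt (fun t => ∫ x in Ioi t, q x ^ 2) (-(q s ^ 2)) s :=
  hasDerivAt_integral_Ioi (hq.pow 2) (integrableOn_Ioi_sq hq hq0) s

theorem hasDerivAt_exp_neg_integral_Ioi_sub_mul_sq {q u F : ℝ → ℝ} (hq : Continuous q)
    (hq0 : q =O[atTop] fun x => exp (-x)) (hu : ∀ s, u s = ∫ x in Ioi s, q x ^ 2)
    (hF : ∀ s, F s = exp (-(∫ x in Ioi s, (x - s) * q x ^ 2))) (s : ℝ) :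
    HasDerivAt F (u s * F s) s := by
  have hxq2 : ∀ a, IntegrableOn (fun x => x * q x ^ 2) (Ioi a) :=
    integrableOn_Ioi_of_isBigO_exp_neg (continuous_id.mul (hq.pow 2)) <| by
      simpa only [sq, mul_left_comm] using hq0.mul_tendsto (tendsto_id_mul_of_isBigO_exp_neg hq0)
  have hsplit : (fun t => ∫ x in Ioi t, (x - t) * q x ^ 2)
      = fun t => (∫ x in Ioi t, x * q x ^ 2) - t * u t := by
    ext t
    simp_rw [sub_mul]
    rw [integral_sub (hxq2 t) ((integrableOn_Ioi_sq hq hq0 t).const_mul t), integral_const_mul,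
      hu]
  have hv : HasDerivAt (fun t => ∫ x in Ioi t, (x - t) * q x ^ 2) (-u s) s := by
    rw [hsplit]
    have hu' : HasDerivAt u (-(q s ^ 2)) s := by
      rw [funext hu]; exact hasDerivAt_integral_Ioi_sq hq hq0 s
    exact ((hasDerivAt_integral_Ioi (continuous_id.mul (hq.pow 2)) hxq2 s).sub
      ((hasDerivAt_id s).mul hu')).congr_deriv (by simp)
  rw [show F = _ from funext hF]
  exact hv.fun_neg.exp.congr_deriv (by rw [neg_neg, mul_comm])

theorem integral_Ioi_q1_mul_q {q u q1 : ℝ → ℝ} (hq : Differentiable ℝ q)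
    (hu : ∀ s, HasDerivAt u (-(q s ^ 2)) s) (hq_lim : Tendsto q atTop (𝓝 0))
    (hu_lim : Tendsto u atTop (𝓝 0)) (hq1 : ∀ s, q1 s = deriv q s + u s * q s) {s : ℝ}
    (hint : IntegrableOn (fun x => q1 x * q x) (Ioi s)) :
    ∫ x in Ioi s, q1 x * q x = (u s ^ 2 - q s ^ 2) / 2 := by
  have hderiv : ∀ x ∈ Ici s, HasDerivAt (fun t => (q t ^ 2 - u t ^ 2) / 2) (q1 x * q x) x :=
    fun x _ => (((hq x).hasDerivAt.fun_pow 2).fun_sub ((hu x).fun_pow 2)).div_const 2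
      |>.congr_deriv (by rw [hq1]; push_cast; ring)
  have hlim : Tendsto (fun t => (q t ^ 2 - u t ^ 2) / 2) atTop (𝓝 0) := by
    simpa using ((hq_lim.pow 2).sub (hu_lim.pow 2)).div_const 2
  rw [integral_Ioi_of_hasDerivAt_of_tendsto' hderiv hint hlim]
  ring

theorem tendsto_fourthDerivCoeff {q u : ℝ → ℝ} (hq0 : q =O[atTop] fun x => exp (-x))
    (hp0 : deriv q =O[atTop] fun x => exp (-x)) (hu_lim : Tendsto u atTop (𝓝 0)) :
    Tendsto (fourthDerivCoeff q u) atTop (𝓝 0) := by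
  have hq_lim := hq0.trans_tendsto tendsto_exp_neg_atTop_nhds_zero
  have hq'_lim := hp0.trans_tendsto tendsto_exp_neg_atTop_nhds_zero
  have hxq_lim := tendsto_id_mul_of_isBigO_exp_neg hq0
  have h := (hu_lim.pow 4).sub (((hu_lim.pow 2).mul (hq_lim.pow 2)).const_mul 6)
    |>.sub (((hu_lim.mul hq_lim).mul hq'_lim).const_mul 8) |>.sub (hq_lim.pow 4)
    |>.sub ((hq'_lim.pow 2).const_mul 2) |>.sub ((hxq_lim.mul hq_lim).const_mul 2)
  norm_num at h
  exact h.congr fun t => by unfold fourthDerivCoeff; ring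

theorem isBigO_exp_neg_q1 {q u q1 : ℝ → ℝ} (hq0 : q =O[atTop] fun x => exp (-x))
    (hp0 : deriv q =O[atTop] fun x => exp (-x)) (hu_lim : Tendsto u atTop (𝓝 0))
    (hq1 : ∀ s, q1 s = deriv q s + u s * q s) : q1 =O[atTop] fun x => exp (-x) := by
  rw [funext hq1]
  exact hp0.add ((hq0.mul_tendsto hu_lim).congr_left fun x => mul_comm _ _)

theorem tendsto_q2 {q u q1 u10 q2 : ℝ → ℝ} (hq0 : q =O[atTop] fun x => exp (-x))
    (hq10 : q1 =O[atTop] fun x => exp (-x)) (hu_lim : Tendsto u atTop (𝓝 0))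
    (hu10_lim : Tendsto u10 atTop (𝓝 0))
    (hq2 : ∀ s, q2 s = s * q s - u10 s * q s + u s * q1 s) : Tendsto q2 atTop (𝓝 0) := by
  rw [funext hq2]
  simpa using ((tendsto_id_mul_of_isBigO_exp_neg hq0).sub
    (hu10_lim.mul (hq0.trans_tendsto tendsto_exp_neg_atTop_nhds_zero))).add
    (hu_lim.mul (hq10.trans_tendsto tendsto_exp_neg_atTop_nhds_zero))

theorem integral_Ioi_q2_mul_q1 {q u q1 u10 q2 : ℝ → ℝ} (hq : Differentiable ℝ q)
    (hq'' : ∀ s, HasDerivAt (deriv q) (s * q s + 2 * q s ^ 3) s)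
    (hu : ∀ s, HasDerivAt u (-(q s ^ 2)) s) (hP_lim : Tendsto (fourthDerivCoeff q u) atTop (𝓝 0))
    (hu_lim : Tendsto u atTop (𝓝 0)) (hq1 : ∀ s, q1 s = deriv q s + u s * q s)
    (hu10 : ∀ s, u10 s = (u s ^ 2 - q s ^ 2) / 2)
    (hq2 : ∀ s, q2 s = s * q s - u10 s * q s + u s * q1 s) {s : ℝ}
    (hint : IntegrableOn (fun x => q2 x * q1 x) (Ioi s)) :
    ∫ x in Ioi s, q2 x * q1 x = -(1 / 4) * u s + (1 / 8) * fourthDerivCoeff q u s := by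
  have hderiv : ∀ x ∈ Ici s,
      HasDerivAt (fun t => (1 / 4) * u t - (1 / 8) * fourthDerivCoeff q u t) (q2 x * q1 x) x :=
    fun x _ => by
    have hq' := (hq x).hasDerivAt
    have hP := ((hu x).fun_pow 4)
      |>.fun_sub (((hu x).fun_pow 2).const_mul 6 |>.fun_mul (hq'.fun_pow 2))
      |>.fun_sub ((((hu x).const_mul 8).fun_mul hq').fun_mul (hq'' x)) |>.fun_sub (hq'.fun_pow 4)
      |>.fun_sub ((hq'' x).fun_pow 2 |>.const_mul 2)
      |>.fun_sub (((hasDerivAt_id' x).const_mul 2).fun_mul (hq'.fun_pow 2))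
    exact ((hu x).const_mul (1 / 4)).fun_sub (hP.const_mul (1 / 8))
      |>.congr_deriv (by rw [hq2, hq1, hu10]; push_cast; ring)
  have hlim : Tendsto (fun t => (1 / 4) * u t - (1 / 8) * fourthDerivCoeff q u t) atTop (𝓝 0) := by
    simpa only [mul_zero, sub_zero] using
      (hu_lim.const_mul (1 / 4)).sub (hP_lim.const_mul (1 / 8))
  rw [integral_Ioi_of_hasDerivAt_of_tendsto' hderiv hint hlim]
  ring

/-- The table identity `u₂₁·F = -(1/4)·F' + (1/8)·F⁽⁴⁾`, where
`F(s) = exp(-∫_s^∞ (x-s) q(x)² dx)`, `u₀₀(s) = ∫_s^∞ q(x)² dx`, `q₁ = q' + u₀₀·q`,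
`u₁₀(s) = ∫_s^∞ q₁(x) q(x) dx`, `q₂ = s·q - u₁₀·q + u₀₀·q₁`,
`u₂₁(s) = ∫_s^∞ q₂(x) q₁(x) dx`, and `q` is a Painlevé II solution with
exponential decay at `+∞`. -/
theorem F_u21_eq (q F u00 q1 u10 q2 u21 : ℝ → ℝ) (hq : ContDiff ℝ 2 q)
    (hP2 : ∀ s : ℝ, iteratedDeriv 2 q s = s * q s + 2 * q s ^ 3)
    (C : ℝ)
    (hdecay : ∀ s : ℝ, 0 ≤ s →
      |q s| ≤ C * Real.exp (-s) ∧ |deriv q s| ≤ C * Real.exp (-s))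
    (hF : ∀ s : ℝ, F s = Real.exp (-(∫ x in Set.Ioi s, (x - s) * q x ^ 2)))
    (hu00 : ∀ s : ℝ, u00 s = ∫ x in Set.Ioi s, q x ^ 2)
    (hq1 : ∀ s : ℝ, q1 s = deriv q s + u00 s * q s)
    (hu10 : ∀ s : ℝ, u10 s = ∫ x in Set.Ioi s, q1 x * q x)
    (hq2 : ∀ s : ℝ, q2 s = s * q s - u10 s * q s + u00 s * q1 s)
    (hu21 : ∀ s : ℝ, u21 s = ∫ x in Set.Ioi s, q2 x * q1 x) :
    ∀ s : ℝ, F s * u21 s = -(1 / 4) * deriv F s + (1 / 8) * iteratedDeriv 4 F s := by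
  have hqd : Differentiable ℝ q := hq.differentiable (by norm_num)
  have hq'' := hasDerivAt_deriv_of_painleveII hq hP2
  have hq0 := isBigO_exp_neg_of_abs_le fun s hs => (hdecay s hs).1
  have hp0 := isBigO_exp_neg_of_abs_le fun s hs => (hdecay s hs).2
  have hq_lim := hq0.trans_tendsto tendsto_exp_neg_atTop_nhds_zero
  have hu' : ∀ s, HasDerivAt u00 (-(q s ^ 2)) s := by
    rw [funext hu00]; exact hasDerivAt_integral_Ioi_sq hq.continuous hq0
  have hu_lim : Tendsto u00 atTop (𝓝 0) := by
    rw [funext hu00]; exact tendsto_integral_Ioi_zero tendsto_id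
  have hu_cont : Continuous u00 := continuous_iff_continuousAt.2 fun s => (hu' s).continuousAt
  have hq1_cont : Continuous q1 := by
    rw [funext hq1]; exact (hq.continuous_deriv (by norm_num)).add (hu_cont.mul hq.continuous)
  have hq10 := isBigO_exp_neg_q1 hq0 hp0 hu_lim hq1
  have hu10_eq : ∀ s, u10 s = (u00 s ^ 2 - q s ^ 2) / 2 := fun s => (hu10 s).trans <|
    integral_Ioi_q1_mul_q hqd hu' hq_lim hu_lim hq1 <|
      integrableOn_Ioi_of_isBigO_exp_neg (hq1_cont.mul hq.continuous) (hq10.mul_tendsto hq_lim) s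
  have hq2_cont : Continuous q2 := by
    rw [funext hq2, funext hu10_eq]; fun_prop
  have hq2_lim : Tendsto q2 atTop (𝓝 0) := tendsto_q2 hq0 hq10 hu_lim
    (by rw [funext hu10]; exact tendsto_integral_Ioi_zero tendsto_id) hq2
  have hu21_eq : ∀ s, u21 s = -(1 / 4) * u00 s + (1 / 8) * fourthDerivCoeff q u00 s :=
    fun s => (hu21 s).trans <| integral_Ioi_q2_mul_q1 hqd hq'' hu'
      (tendsto_fourthDerivCoeff hq0 hp0 hu_lim) hu_lim hq1 hu10_eq hq2 <|
      integrableOn_Ioi_of_isBigO_exp_neg (hq2_cont.mul hq1_cont)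
        ((hq10.mul_tendsto hq2_lim).congr_left fun x => mul_comm _ _) s
  have hF' := hasDerivAt_exp_neg_integral_Ioi_sub_mul_sq hq.continuous hq0 hu00 hF
  intro s
  rw [hu21_eq, (hF' s).deriv, iteratedDeriv_four_eq hqd hq'' hu' hF']
  ring
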